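/- arXiv:cs/0606026 — 5 statements merged into one kernel-verified Lean document; each statement's English description precedes it below -/
import Mathlib

section
/- A set A ⊆ F_2^r is generic (r,m)-erasure reducing if and only if for every binary r×m matrix M of rank m there exists a vector a ∈ A such that the vector aM has Hamming weight exactly 1. -/
/-- `A` is generic `(r,m)`-erasure reducing: for every `n ≥ r`, every rank-`r`
parity check matrix `H` of size `r × n`, and every `C`-correctable erasure
pattern `E` of size `m` (i.e. `E` contains no support of a nonzero codeword of
the code with parity check matrix `H`), some `a ∈ A` gives a parity check
`a ᵥ* H` with exactly one nonzero entry inside `E`. -/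
def GenericReducing (r m : ℕ) (A : Set (Fin r → ZMod 2)) : Prop :=
  ∀ (n : ℕ), r ≤ n → ∀ H : Matrix (Fin r) (Fin n) (ZMod 2), H.rank = r →
    ∀ E : Finset (Fin n), E.card = m →
      (¬ ∃ x : Fin n → ZMod 2, x ≠ 0 ∧ H.mulVec x = 0 ∧
          {j | x j ≠ 0} ⊆ (E : Set (Fin n))) →
      ∃ a ∈ A, (E.filter (fun j => Matrix.vecMul a H j ≠ 0)).card = 1

/-!
Both conditions only see the columns of `H` indexed by `E`: `E` is correctable exactly when the
`r × m` submatrix `H(E)` has full column rank `m`, and `a H` has a single nonzero entry on `E`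
exactly when `a H(E)` has Hamming weight one. So erasure reduction for all `H` amounts to the
matrix condition for all the `H(E)`; conversely every `M` of rank `m` is `H(E)` for `H = [M | I]`,
which has rank `r` thanks to its identity block.
-/

open Matrix Finset

namespace Matrix

variable {R K ρ ι κ : Type*}

section Semiring

variable [CommSemiring R]

theorem rank_fromCols_one [StrongRankCondition R] [Fintype ρ] [DecidableEq ρ] [Fintype κ]
    (M : Matrix ρ κ R) : (fromCols M (1 : Matrix ρ ρ R)).rank = Fintype.card ρ :=
  le_antisymm (rank_le_card_height _) <|
    rank_one.symm.trans_le (rank_submatrix_le (fromCols M (1 : Matrix ρ ρ R)) id Sum.inr)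

theorem card_filter_map_univ_vecMul_ne_zero [DecidableEq R] [Fintype ρ] [Fintype κ]
    (H : Matrix ρ ι R) (f : κ ↪ ι) (a : ρ → R) :
    ((univ.map f).filter fun j => (a ᵥ* H) j ≠ 0).card = hammingNorm (a ᵥ* H.submatrix id f) := by
  rw [filter_map, card_map]
  rfl

variable [Fintype ι]

def ErasureCorrectable (H : Matrix ρ ι R) (E : Finset ι) : Prop :=
  ¬ ∃ x : ι → R, x ≠ 0 ∧ H *ᵥ x = 0 ∧ {j | x j ≠ 0} ⊆ (E : Set ι)

theorem erasureCorrectable_iff (H : Matrix ρ ι R) (E : Finset ι) :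
    ErasureCorrectable H E ↔ ∀ x, H *ᵥ x = 0 → (∀ j ∉ E, x j = 0) → x = 0 := by
  constructor
  · intro h x hx hoff
    by_contra hx0
    exact h ⟨x, hx0, hx, fun j hj => by_contra fun hjE => hj (hoff j hjE)⟩
  · rintro h ⟨x, hx0, hx, hsupp⟩
    exact hx0 (h x hx fun j hj => by_contra fun h' => hj (hsupp h'))

theorem mulVec_eq_submatrix_mulVec_comp [Fintype κ] (H : Matrix ρ ι R) (f : κ ↪ ι) {x : ι → R}
    (hx : ∀ j ∉ Set.range f, x j = 0) : H *ᵥ x = H.submatrix id f *ᵥ (x ∘ f) := by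
  ext i
  exact (Fintype.sum_of_injective f f.injective _ _ (fun j hj => by simp [hx j hj])
    fun _ => rfl).symm

end Semiring

section Field

variable [Field K] [Fintype κ]

theorem rank_eq_card_width_iff (M : Matrix ρ κ K) :
    M.rank = Fintype.card κ ↔ ∀ y, M *ᵥ y = 0 → y = 0 := by
  rw [← ker_mulVecLin_eq_bot_iff, ← Submodule.finrank_eq_zero, rank,
    ← Module.finrank_fintype_fun_eq_card (R := K)]
  have := M.mulVecLin.finrank_range_add_finrank_ker
  omega

theorem erasureCorrectable_map_univ_iff [Fintype ι] (H : Matrix ρ ι K) (f : κ ↪ ι) :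
    ErasureCorrectable H (univ.map f) ↔ (H.submatrix id f).rank = Fintype.card κ := by
  have hmem : ∀ j, j ∈ univ.map f ↔ j ∈ Set.range f := by simp
  simp only [erasureCorrectable_iff, rank_eq_card_width_iff, hmem]
  constructor
  · intro h y hy
    have hext : ∀ j ∉ Set.range f, Function.extend f y 0 j = 0 := fun j hj =>
      Function.extend_apply' _ _ _ (by simpa using hj)
    rw [← Function.extend_comp f.injective y 0, h _ (by
      rwa [mulVec_eq_submatrix_mulVec_comp H f hext, Function.extend_comp f.injective]) hext]
    rfl
  · intro h x hx hoff
    have hon : x ∘ f = 0 := h _ (by rwa [← mulVec_eq_submatrix_mulVec_comp H f hoff])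
    ext j
    by_cases hj : j ∈ Set.range f
    · obtain ⟨k, rfl⟩ := hj
      exact congrFun hon k
    · exact hoff j hj

end Field

end Matrix

theorem stmt0_general (r m : ℕ) (A : Set (Fin r → ZMod 2)) :
    GenericReducing r m A ↔
      ∀ M : Matrix (Fin r) (Fin m) (ZMod 2), M.rank = m →
        ∃ a ∈ A, hammingNorm (Matrix.vecMul a M) = 1 := by
  constructor
  · intro hA M hM
    set H := reindex (.refl _) finSumFinEquiv (fromCols M (1 : Matrix (Fin r) (Fin r) (ZMod 2)))
    have hHM : H.submatrix id (Fin.castAddEmb r) = M := by ext; simp [H]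
    have hH : H.rank = r := by rw [rank_reindex, rank_fromCols_one, Fintype.card_fin]
    have hE : ErasureCorrectable H (univ.map (Fin.castAddEmb r)) := by
      rwa [erasureCorrectable_map_univ_iff, hHM, Fintype.card_fin]
    obtain ⟨a, ha, h⟩ := hA _ le_add_self H hH _ (by simp) hE
    exact ⟨a, ha, by rwa [card_filter_map_univ_vecMul_ne_zero, hHM] at h⟩
  · intro hM n _ H _ E hE hE'
    rw [← E.map_orderEmbOfFin_univ hE] at hE' ⊢
    obtain ⟨a, ha, h⟩ :=
      hM _ (((erasureCorrectable_map_univ_iff H _).mp hE').trans (Fintype.card_fin m))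
    exact ⟨a, ha, by rwa [card_filter_map_univ_vecMul_ne_zero]⟩

theorem stmt0 (r m : ℕ) (hm : 1 ≤ m) (hmr : m ≤ r) (A : Set (Fin r → ZMod 2)) :
    GenericReducing r m A ↔
      ∀ M : Matrix (Fin r) (Fin m) (ZMod 2), M.rank = m →
        ∃ a ∈ A, hammingNorm (Matrix.vecMul a M) = 1 :=
  stmt0_general r m A
end

section
/- If 2 ≤ m ≤ r and A ⊆ F_2^r has the property that for every r×m binary matrix of rank m there is a ∈ A with wt(aM)=1, then A also has this property for r×(m-1) matrices: for every r×(m-1) binary matrix M' of rank m-1 there exists a ∈ A with wt(aM')=1. -/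
/-!
Extend `M'` by a column `v` outside its column span, and add `v` to one old column as well:
`M = [v | c₀ + v | c₁ | … ]` has full rank `m`. For `a ∈ A` with `wt(aM) = 1`, put `u = a·v`;
then `aM = (u, aM' + u e₀)`. If `u = 0` this is `(0, aM')`; otherwise `aM' + u e₀ = 0`, so
`aM' = -u e₀`. Either way `wt(aM') = 1`. Adding `v` to `c₀` is what rules out
`aM = (1, 0, …, 0)` with `aM' = 0`.
-/

open Matrix Submodule Module

theorem hammingNorm_cons {β : Type*} [Zero β] [DecidableEq β] {n : ℕ} (x : β) (y : Fin n → β) :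
    hammingNorm (Fin.cons x y : Fin (n + 1) → β) = (if x = 0 then 0 else 1) + hammingNorm y := by
  simp only [hammingNorm, Finset.card_filter, Fin.sum_univ_succ, Fin.cons_zero, Fin.cons_succ,
    ite_not]

theorem hammingNorm_single {β : Type*} [Zero β] [DecidableEq β] {n : Type*} [Fintype n]
    [DecidableEq n] (j : n) {x : β} (hx : x ≠ 0) : hammingNorm (Pi.single j x : n → β) = 1 := by
  rw [hammingNorm, Finset.card_eq_one]
  exact ⟨j, by ext i; by_cases h : i = j <;> simp [h, hx]⟩

theorem hammingNorm_eq_one_of_cons_add_single {R : Type*} [AddGroup R] [DecidableEq R] {n : ℕ}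
    {x : Fin n → R} {u : R} {j : Fin n}
    (h : hammingNorm (Fin.cons u (x + Pi.single j u) : Fin (n + 1) → R) = 1) :
    hammingNorm x = 1 := by
  rw [hammingNorm_cons] at h
  by_cases hu : u = 0
  · simpa [hu] using h
  · rw [if_neg hu, add_eq_left, hammingNorm_eq_zero] at h
    rw [eq_neg_of_add_eq_zero_left h, ← Pi.single_neg, hammingNorm_single j (neg_ne_zero.2 hu)]

theorem span_range_cons_add_single {K V : Type*} [Ring K] [AddCommGroup V] [Module K V]
    {n : ℕ} (v : V) (c : Fin n → V) (j : Fin n) :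
    span K (Set.range (Fin.cons v (c + Pi.single j v) : Fin (n + 1) → V)) =
      span K (Set.range (Fin.cons v c : Fin (n + 1) → V)) := by
  have single_mem (f : Fin n → V) (k : Fin n) :
      (Pi.single j v : Fin n → V) k ∈ span K (Set.range (Fin.cons v f : Fin (n + 1) → V)) := by
    rw [Pi.single_apply]
    split_ifs
    exacts [subset_span ⟨0, rfl⟩, zero_mem _]
  apply le_antisymm <;> rw [span_le] <;> rintro _ ⟨k, rfl⟩ <;>
    refine Fin.cases (subset_span ⟨0, rfl⟩) (fun k => ?_) k
  · exact add_mem (subset_span ⟨k.succ, rfl⟩) (single_mem c k)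
  · rw [Fin.cons_succ, ← add_sub_cancel_right (c k) ((Pi.single j v : Fin n → V) k)]
    exact sub_mem (subset_span ⟨k.succ, rfl⟩) (single_mem _ k)

namespace Matrix

variable {ι K : Type*} [Field K] {n : ℕ}

theorem exists_notMem_span_cols_of_rank_lt [Fintype ι] {κ : Type*} [Fintype κ]
    (M : Matrix ι κ K) (h : M.rank < Fintype.card ι) : ∃ v, v ∉ span K (Set.range M.col) := by
  by_contra! hspan
  rw [rank_eq_finrank_span_cols, eq_top_iff'.2 hspan, finrank_top,
    finrank_fintype_fun_eq_card] at h
  exact lt_irrefl _ h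

/-- The matrix with columns `v, c₀, …, cⱼ + v, …, cₙ₋₁`, where the `cₖ` are the columns of `M`. -/
def consColAddToCol (M : Matrix ι (Fin n) K) (v : ι → K) (j : Fin n) :
    Matrix ι (Fin (n + 1)) K :=
  (of (Fin.cons v (M.col + Pi.single j v)))ᵀ

theorem col_consColAddToCol (M : Matrix ι (Fin n) K) (v : ι → K) (j : Fin n) :
    (consColAddToCol M v j).col = Fin.cons v (M.col + Pi.single j v) :=
  rfl

theorem vecMul_consColAddToCol [Fintype ι] (M : Matrix ι (Fin n) K) (v : ι → K) (j : Fin n)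
    (a : ι → K) :
    vecMul a (consColAddToCol M v j) =
      Fin.cons (a ⬝ᵥ v) (vecMul a M + Pi.single j (a ⬝ᵥ v)) := by
  ext k
  refine Fin.cases rfl (fun k => ?_) k
  change a ⬝ᵥ (M.col k + (Pi.single j v : Fin n → ι → K) k) = _
  rw [dotProduct_add, Fin.cons_succ, Pi.add_apply, Pi.single_apply, Pi.single_apply]
  split_ifs
  · rfl
  · rw [dotProduct_zero]
    rfl

theorem rank_consColAddToCol [Fintype ι] {M : Matrix ι (Fin n) K} (hM : M.rank = n)
    {v : ι → K} (hv : v ∉ span K (Set.range M.col)) (j : Fin n) :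
    (consColAddToCol M v j).rank = n + 1 := by
  have hind : LinearIndependent K M.col := by
    rw [linearIndependent_iff_card_eq_finrank_span, Fintype.card_fin, Set.finrank,
      ← rank_eq_finrank_span_cols, hM]
  rw [rank_eq_finrank_span_cols, col_consColAddToCol,
    span_range_cons_add_single, finrank_span_eq_card (linearIndependent_finCons.2 ⟨hind, hv⟩),
    Fintype.card_fin]

end Matrix

theorem exists_hammingNorm_vecMul_eq_one_of_forall_rank_succ {ι K : Type*} [Fintype ι] [Field K]
    [DecidableEq K] {n : ℕ} (hn : n + 2 ≤ Fintype.card ι) (A : Set (ι → K))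
    (hA : ∀ M : Matrix ι (Fin (n + 2)) K, M.rank = n + 2 →
      ∃ a ∈ A, hammingNorm (vecMul a M) = 1)
    (M' : Matrix ι (Fin (n + 1)) K) (hM' : M'.rank = n + 1) :
    ∃ a ∈ A, hammingNorm (vecMul a M') = 1 := by
  obtain ⟨v, hv⟩ := M'.exists_notMem_span_cols_of_rank_lt (by omega)
  obtain ⟨a, haA, ha⟩ := hA _ (rank_consColAddToCol hM' hv 0)
  rw [vecMul_consColAddToCol] at ha
  exact ⟨a, haA, hammingNorm_eq_one_of_cons_add_single ha⟩

theorem stmt1 (r m : ℕ) (hm : 2 ≤ m) (hmr : m ≤ r) (A : Set (Fin r → ZMod 2))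
    (hA : ∀ M : Matrix (Fin r) (Fin m) (ZMod 2), M.rank = m →
        ∃ a ∈ A, hammingNorm (Matrix.vecMul a M) = 1) :
    ∀ M' : Matrix (Fin r) (Fin (m - 1)) (ZMod 2), M'.rank = m - 1 →
      ∃ a ∈ A, hammingNorm (Matrix.vecMul a M') = 1 := by
  obtain ⟨n, rfl⟩ : ∃ n, m = n + 2 := ⟨m - 2, by omega⟩
  exact exists_hammingNorm_vecMul_eq_one_of_forall_rank_succ (by simpa using hmr) A hA
end

section
/- For 2 ≤ m ≤ r, the set A_{r,m} = { a ∈ F_2^r : a_1 = 1 and wt(a) ≤ m } satisfies: for every binary r×m matrix M of rank m, there exists a ∈ A_{r,m} with wt(aM) = 1. -/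
/-!
Since `M` has rank `m`, its rows span `𝔽₂^m`, so some rows form a basis, and we may take row `0`
among them when it is nonzero. Expanding a unit vector `e_j` in this basis gives `a`, supported on
at most `m` rows, with `aM = e_j`. If row `0` is in the basis, some `e_j` has a nonzero coefficient
on it, since the unit vectors cannot all lie in the span of the other basis rows. If row `0` is
zero, two distinct unit vectors cannot both use every basis row (over `𝔽₂` a coefficient vector is
determined by its support), so one of them uses at most `m - 1`; adding row `0` to it leaves `aM`
unchanged.
-/

open Finset Finsupp Submodule Module Matrix

theorem Matrix.span_range_row_eq_top_of_rank_eq {K m n : Type*} [Field K] [Fintype m]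
    [Fintype n] {M : Matrix m n K} (hM : M.rank = Fintype.card n) :
    span K (Set.range M.row) = ⊤ :=
  eq_top_of_finrank_eq (by rw [← M.rank_eq_finrank_span_row, hM, finrank_fintype_fun_eq_card])

theorem Matrix.finsupp_vecMul {R m n : Type*} [CommSemiring R] [Fintype m] (l : m →₀ R)
    (M : Matrix m n R) : ⇑l ᵥ* M = linearCombination R M.row l := by
  rw [vecMul_eq_sum, linearCombination_apply, sum_fintype _ _ (by simp)]
  rfl

theorem hammingNorm_coe_finsupp {ι β : Type*} [Fintype ι] [Zero β] [DecidableEq β]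
    (l : ι →₀ β) : hammingNorm ⇑l = #l.support := by
  rw [hammingNorm]
  congr 1
  ext i
  simp

theorem hammingNorm_pi_single {ι β : Type*} [Fintype ι] [DecidableEq ι] [Zero β] [DecidableEq β]
    (i : ι) {b : β} (hb : b ≠ 0) : hammingNorm (Pi.single i b : ι → β) = 1 := by
  rw [← Finsupp.single_eq_pi_single, hammingNorm_coe_finsupp, support_single i hb, card_singleton]

theorem Finsupp.support_injective_zmod_two {ι : Type*} :
    Function.Injective (Finsupp.support : (ι →₀ ZMod 2) → Finset ι) := by
  intro l l' h
  ext i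
  have hi : l i ≠ 0 ↔ l' i ≠ 0 := by simpa only [mem_support_iff] using Finset.ext_iff.1 h i
  exact (by decide : ∀ x y : ZMod 2, (x ≠ 0 ↔ y ≠ 0) → x = y) _ _ hi

theorem Submodule.exists_single_notMem_of_ne_top {R n : Type*} [Semiring R] [Finite n]
    [DecidableEq n] {W : Submodule R (n → R)} (hW : W ≠ ⊤) : ∃ j, Pi.single j 1 ∉ W := by
  by_contra! h
  cases nonempty_fintype n
  refine hW (eq_top_iff.2 ?_)
  rw [← (Pi.basisFun R n).span_eq, span_le]
  rintro _ ⟨j, rfl⟩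
  simpa using h j

section DivisionRing

variable {K V ι : Type*} [DivisionRing K] [AddCommGroup V] [Module K V] {v : ι → V}

theorem exists_finset_linearIndepOn_span_eq_top [Finite ι] (hv : span K (Set.range v) = ⊤)
    {s₀ : Finset ι} (hs₀ : LinearIndepOn K v ↑s₀) :
    ∃ s : Finset ι, s₀ ⊆ s ∧ LinearIndepOn K v ↑s ∧ span K (v '' ↑s) = ⊤ := by
  obtain ⟨s, -, hs₀s, hspan, hs⟩ := exists_linearIndepOn_extension hs₀ (Set.subset_univ _)
  lift s to Finset ι using s.toFinite
  refine ⟨s, by exact_mod_cast hs₀s, hs, eq_top_iff.2 ?_⟩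
  rw [← hv, ← Set.image_univ, span_le]
  exact hspan

theorem LinearIndepOn.finset_card_le_finrank [FiniteDimensional K V] {s : Finset ι}
    (hs : LinearIndepOn K v ↑s) : #s ≤ finrank K V := by
  simpa using hs.linearIndependent.fintype_card_le_finrank

theorem LinearIndepOn.apply_notMem_span_image_diff_singleton {s : Set ι} {i : ι}
    (hs : LinearIndepOn K v s) (hi : i ∈ s) : v i ∉ span K (v '' (s \ {i})) := by
  rw [(hs.mono Set.sdiff_subset).notMem_span_iff]
  simpa [Set.insert_eq_of_mem hi] using hs

theorem exists_linearCombination_eq_single_apply_ne_zero {n : Type*} [Finite n] [DecidableEq n]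
    {v : ι → n → K} {s : Set ι} {i : ι} (hs : LinearIndepOn K v s)
    (hspan : span K (v '' s) = ⊤) (hi : i ∈ s) :
    ∃ j, ∃ l ∈ supported K K s, linearCombination K v l = Pi.single j 1 ∧ l i ≠ 0 := by
  have hW : span K (v '' (s \ {i})) ≠ ⊤ := fun h =>
    hs.apply_notMem_span_image_diff_singleton hi (h ▸ mem_top)
  obtain ⟨j, hj⟩ := exists_single_notMem_of_ne_top hW
  obtain ⟨l, hl, hlj⟩ :=
    (mem_span_image_iff_linearCombination K).1 (hspan ▸ mem_top : Pi.single j 1 ∈ _)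
  refine ⟨j, l, hl, hlj, fun hli => hj ((mem_span_image_iff_linearCombination K).2 ⟨l, ?_, hlj⟩)⟩
  rw [mem_supported] at hl ⊢
  intro k hk
  exact ⟨hl hk, fun hki => mem_support_iff.1 hk (hki ▸ hli)⟩

end DivisionRing

theorem exists_linearCombination_eq_single_card_support_lt {ι n : Type*} [DecidableEq n]
    [Nontrivial n] {v : ι → n → ZMod 2} {s : Finset ι} (hspan : span (ZMod 2) (v '' ↑s) = ⊤) :
    ∃ j, ∃ l ∈ supported (ZMod 2) (ZMod 2) ↑s,
      linearCombination (ZMod 2) v l = Pi.single j 1 ∧ #l.support < #s := by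
  have hexp (j : n) := (mem_span_image_iff_linearCombination (ZMod 2)).1
    (hspan ▸ mem_top : Pi.single j (1 : ZMod 2) ∈ _)
  obtain ⟨j, j', hjj'⟩ := exists_pair_ne n
  obtain ⟨l, hl, hlj⟩ := hexp j
  obtain ⟨l', hl', hlj'⟩ := hexp j'
  by_contra! h
  have hfull : ∀ j, ∀ l ∈ supported (ZMod 2) (ZMod 2) ↑s,
      linearCombination (ZMod 2) v l = Pi.single j 1 → l.support = s := fun j l hl hlj =>
    eq_of_subset_of_card_le (by exact_mod_cast (mem_supported _ _).1 hl) (h j l hl hlj)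
  have hll' := support_injective_zmod_two ((hfull j l hl hlj).trans (hfull j' l' hl' hlj').symm)
  rw [hll', hlj'] at hlj
  simpa [hjj'] using congrFun hlj j

theorem stmt3 (r m : ℕ) (hm : 2 ≤ m) (hmr : m ≤ r)
    (M : Matrix (Fin r) (Fin m) (ZMod 2)) (hM : M.rank = m) :
    ∃ a : Fin r → ZMod 2, a ⟨0, by omega⟩ = 1 ∧ hammingNorm a ≤ m ∧
      hammingNorm (Matrix.vecMul a M) = 1 := by
  set i₀ : Fin r := ⟨0, by omega⟩
  have : Nontrivial (Fin m) := Fin.nontrivial_iff_two_le.2 hm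
  have hspan := M.span_range_row_eq_top_of_rank_eq (hM.trans (Fintype.card_fin m).symm)
  have hcard {s : Finset (Fin r)} (hs : LinearIndepOn (ZMod 2) M.row ↑s) : #s ≤ m := by
    simpa using hs.finset_card_le_finrank
  by_cases h₀ : M.row i₀ = 0
  · obtain ⟨s, -, hs, hs_span⟩ := exists_finset_linearIndepOn_span_eq_top hspan (s₀ := ∅) (by simp)
    obtain ⟨j, l, hl, hlj, hlt⟩ := exists_linearCombination_eq_single_card_support_lt hs_span
    have hli₀ : l i₀ = 0 :=
      notMem_support_iff.1 fun hi => hs.ne_zero ((mem_supported _ _).1 hl hi) h₀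
    refine ⟨⇑(l + single i₀ (1 : ZMod 2)), by simp [hli₀], ?_, ?_⟩
    · rw [hammingNorm_coe_finsupp]
      calc #(l + single i₀ 1).support ≤ #l.support + #(single i₀ (1 : ZMod 2)).support :=
            (card_le_card support_add).trans (card_union_le _ _)
        _ = #l.support + 1 := by rw [support_single i₀ one_ne_zero, card_singleton]
        _ ≤ m := hlt.trans_le (hcard hs)
    · rw [finsupp_vecMul, map_add, hlj, linearCombination_single, one_smul, h₀, add_zero,
        hammingNorm_pi_single j one_ne_zero]
  · obtain ⟨s, hs₀, hs, hs_span⟩ := exists_finset_linearIndepOn_span_eq_top hspan (s₀ := {i₀})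
      (by rw [coe_singleton, linearIndepOn_singleton_iff]; exact h₀)
    obtain ⟨j, l, hl, hlj, hli₀⟩ :=
      exists_linearCombination_eq_single_apply_ne_zero hs hs_span (hs₀ (mem_singleton_self i₀))
    refine ⟨l, Fin.eq_one_of_ne_zero _ hli₀, ?_, ?_⟩
    · rw [hammingNorm_coe_finsupp]
      exact (card_le_card (by exact_mod_cast (mem_supported _ _).1 hl)).trans (hcard hs)
    · rw [finsupp_vecMul, hlj, hammingNorm_pi_single j one_ne_zero]
end

section
/- For all 1 ≤ m ≤ r, F(r,m) ≤ ⌈ m·r / (−log_2(1 − m·2^{−m})) ⌉; in particular F(r,m) is at most c_m · r for the constant c_m = m/(−log_2(1−m·2^{−m})) (up to rounding), so F(r,m) grows at most linearly in r for fixed m. -/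
/-- The property that `A` is generic `(r,m)`-erasure reducing, via the matrix
characterization. -/
def IsGenericReducing (r m : ℕ) (A : Set (Fin r → ZMod 2)) : Prop :=
  ∀ M : Matrix (Fin r) (Fin m) (ZMod 2), M.rank = m →
    ∃ a ∈ A, hammingNorm (Matrix.vecMul a M) = 1

/-- `F r m`: the minimum cardinality of a generic `(r,m)`-erasure reducing set. -/
noncomputable def F (r m : ℕ) : ℕ :=
  sInf {n | ∃ A : Finset (Fin r → ZMod 2), IsGenericReducing r m ↑A ∧ A.card = n}

/-!
For a full-rank `M`, the map `a ↦ aM` is a surjective linear map `𝔽₂ʳ → 𝔽₂ᵐ`, so all its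
fibres have the same size and exactly a fraction `m·2⁻ᵐ` of the vectors `a` satisfy
`wt(aM) = 1`. Hence, among all `N`-tuples of vectors, the tuples missing a given `M`
form a fraction `(1 - m·2⁻ᵐ)ᴺ`; there are fewer than `2ᵐʳ` full-rank matrices, and for
`N = ⌈mr / -log₂(1 - m·2⁻ᵐ)⌉` we have `2ᵐʳ (1 - m·2⁻ᵐ)ᴺ ≤ 1`, so some tuple misses none of them.
-/

open Finset Matrix

section HammingNorm

variable {ι K : Type*} [Fintype ι] [DecidableEq ι] [Zero K] [DecidableEq K]

theorem hammingNorm_eq_one_iff {x : ι → K} :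
    hammingNorm x = 1 ↔ ∃ i, ∃ a ≠ 0, Pi.single i a = x := by
  constructor
  · intro h
    obtain ⟨i, hi⟩ := card_eq_one.1 h
    have hsupp : ∀ j, x j ≠ 0 ↔ j = i := fun j => by
      simpa using congrArg (j ∈ ·) hi
    refine ⟨i, x i, (hsupp i).2 rfl, funext fun j => ?_⟩
    by_cases hj : j = i
    · subst hj; simp
    · rw [Pi.single_eq_of_ne hj]
      exact (not_not.1 (mt (hsupp j).1 hj)).symm
  · rintro ⟨i, a, ha, rfl⟩
    rw [hammingNorm, card_eq_one]
    exact ⟨i, by ext j; by_cases hj : j = i <;> simp [hj, ha]⟩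

theorem card_filter_hammingNorm_eq_one [Fintype K] :
    #{x : ι → K | hammingNorm x = 1} = Fintype.card ι * (Fintype.card K - 1) := by
  have hsingle : ({x | hammingNorm x = 1} : Finset (ι → K)) =
      (univ : Finset (ι × {a : K // a ≠ 0})).image fun p => Pi.single p.1 p.2 := by
    ext x; simp [hammingNorm_eq_one_iff]
  rw [hsingle, card_image_of_injective]
  · simp [Fintype.card_subtype_compl]
  · rintro ⟨i, a, ha⟩ ⟨j, b, hb⟩ h
    have hij : i = j := by
      by_contra hij
      exact ha (by simpa [hij] using congrFun h i)
    subst hij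
    simpa using congrFun h i

end HammingNorm

theorem AddMonoidHom.card_filter_mem_mul_card_of_surjective {G H Φ : Type*} [AddGroup G]
    [Fintype G] [AddMonoid H] [Fintype H] [DecidableEq H] [FunLike Φ G H]
    [AddMonoidHomClass Φ G H] (f : Φ) (hf : Function.Surjective f) (S : Finset H) :
    #{g | f g ∈ S} * Fintype.card H = #S * Fintype.card G := by
  have hpre (S : Finset H) : #{g | f g ∈ S} = #S * #{g | f g = 0} := by
    rw [card_eq_sum_card_fiberwise (f := f) (t := S) (fun g hg => by simpa using hg),
      ← smul_eq_mul, ← sum_const]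
    refine sum_congr rfl fun y hy => ?_
    rw [← AddMonoidHom.card_fiber_eq_of_mem_range f (hf y) (hf 0), filter_filter]
    exact congrArg card (filter_congr fun g _ => ⟨And.right, fun h => ⟨h ▸ hy, h⟩⟩)
  have huniv : Fintype.card G = Fintype.card H * #{g | f g = 0} := by simpa using hpre univ
  rw [hpre, huniv]; ring

theorem Matrix.vecMul_surjective_of_rank_eq {m n K : Type*} [Fintype m] [Fintype n] [Field K]
    {M : Matrix m n K} (h : M.rank = Fintype.card n) : Function.Surjective (vecMul · M) := by
  have : LinearMap.range M.vecMulLinear = ⊤ := Submodule.eq_top_of_finrank_eq <| by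
    rw [← mulVecLin_transpose, ← rank, rank_transpose, h, Module.finrank_fintype_fun_eq_card]
  exact LinearMap.range_eq_top.1 this

theorem Matrix.card_filter_hammingNorm_vecMul_eq_one {m n K : Type*} [Fintype m] [DecidableEq m]
    [Fintype n] [DecidableEq n] [Field K] [Fintype K] [DecidableEq K] {M : Matrix m n K}
    (h : M.rank = Fintype.card n) :
    #{a | hammingNorm (vecMul a M) = 1} * Fintype.card K ^ Fintype.card n =
      Fintype.card n * (Fintype.card K - 1) * Fintype.card K ^ Fintype.card m := by
  simpa [card_filter_hammingNorm_eq_one] using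
    AddMonoidHom.card_filter_mem_mul_card_of_surjective M.vecMulLinear
      (vecMul_surjective_of_rank_eq h) {x | hammingNorm x = 1}

/-- The probabilistic method, with probabilities replaced by counts of `N`-tuples. -/
theorem exists_finset_card_le_forall_exists_of_sum_card_pow_lt {ι α : Type*} [Fintype α]
    [DecidableEq α] (s : Finset ι) (P : ι → α → Prop) [∀ i, DecidablePred (P i)] (N : ℕ)
    (h : ∑ i ∈ s, #{a | ¬ P i a} ^ N < Fintype.card α ^ N) :
    ∃ A : Finset α, #A ≤ N ∧ ∀ i ∈ s, ∃ a ∈ A, P i a := by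
  let bad (i : ι) : Finset (Fin N → α) := Fintype.piFinset fun _ => {a | ¬ P i a}
  obtain ⟨f, -, hf⟩ : ∃ f ∈ univ, f ∉ s.biUnion bad := by
    refine exists_mem_notMem_of_card_lt_card (card_biUnion_le.trans_lt ?_)
    simpa [bad, Fintype.card_piFinset] using h
  refine ⟨univ.image f, card_image_le.trans (by simp), fun i hi => ?_⟩
  obtain ⟨j, hj⟩ : ∃ j, P i (f j) := by
    by_contra! hP
    exact hf (mem_biUnion.2 ⟨i, hi, by simpa [bad, Fintype.mem_piFinset] using hP⟩)
  exact ⟨f j, mem_image_of_mem f (mem_univ j), hj⟩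

theorem two_rpow_mul_pow_le_one_of_div_neg_logb_le {q c : ℝ} {N : ℕ} (hq₀ : 0 < q) (hq₁ : q < 1)
    (h : c / -Real.logb 2 q ≤ N) : 2 ^ c * q ^ N ≤ 1 := by
  have hlog : 0 < -Real.logb 2 q := neg_pos.2 (Real.logb_neg one_lt_two hq₀ hq₁)
  have hpow : q ^ N ≤ 2 ^ (-c) := by
    rw [← Real.logb_le_iff_le_rpow one_lt_two (pow_pos hq₀ N), Real.logb_pow]
    rw [div_le_iff₀ hlog] at h
    linarith
  calc 2 ^ c * q ^ N ≤ 2 ^ c * 2 ^ (-c) := by gcongr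
    _ = 1 := by rw [← Real.rpow_add two_pos, add_neg_cancel, Real.rpow_zero]

theorem one_sub_natCast_div_two_pow_pos (m : ℕ) : 0 < 1 - (m : ℝ) / 2 ^ m := by
  have : (m : ℝ) < 2 ^ m := by exact_mod_cast Nat.lt_two_pow_self
  rwa [sub_pos, div_lt_one (by positivity)]

theorem card_filter_not_hammingNorm_vecMul_eq_one {r m : ℕ}
    {M : Matrix (Fin r) (Fin m) (ZMod 2)} (hM : M.rank = m) :
    (#{a | ¬ hammingNorm (vecMul a M) = 1} : ℝ) = (1 - m / 2 ^ m) * 2 ^ r := by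
  have hgood := card_filter_hammingNorm_vecMul_eq_one (M := M) (by simpa using hM)
  have hsplit := card_filter_add_card_filter_not (s := univ)
    (p := fun a : Fin r → ZMod 2 => hammingNorm (vecMul a M) = 1)
  simp only [Fintype.card_fin, ZMod.card, card_univ, Fintype.card_fun, Nat.add_one_sub_one,
    mul_one] at hgood hsplit
  have hgood' : (#{a | hammingNorm (vecMul a M) = 1} : ℝ) * 2 ^ m = m * 2 ^ r := by
    exact_mod_cast hgood
  have hsplit' : (#{a | hammingNorm (vecMul a M) = 1} : ℝ) +
      #{a | ¬ hammingNorm (vecMul a M) = 1} = 2 ^ r := by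
    exact_mod_cast hsplit
  rw [eq_sub_of_add_eq' hsplit']
  field_simp
  linarith

theorem card_filter_rank_eq_lt_two_pow {r m : ℕ} (hm : 0 < m) :
    #{M : Matrix (Fin r) (Fin m) (ZMod 2) | M.rank = m} < 2 ^ (m * r) := by
  have h0 : (0 : Matrix (Fin r) (Fin m) (ZMod 2)) ∉ ({M | M.rank = m} : Finset _) := by
    simp only [mem_filter, mem_univ, rank_zero, true_and]
    omega
  refine (card_lt_univ_of_notMem h0).trans_eq ?_
  rw [Fintype.card_congr Matrix.of.symm]
  simp [← pow_mul]

theorem exists_isGenericReducing_card_le {r m N : ℕ} (hm : 0 < m)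
    (hN : (2 : ℝ) ^ (m * r) * (1 - m / 2 ^ m) ^ N ≤ 1) :
    ∃ A : Finset (Fin r → ZMod 2), IsGenericReducing r m A ∧ #A ≤ N := by
  set q : ℝ := 1 - m / 2 ^ m
  have hsum : ∑ M ∈ {M : Matrix (Fin r) (Fin m) (ZMod 2) | M.rank = m},
      #{a | ¬ hammingNorm (vecMul a M) = 1} ^ N < Fintype.card (Fin r → ZMod 2) ^ N := by
    rw [← Nat.cast_lt (α := ℝ)]
    push_cast
    calc ∑ M ∈ {M : Matrix (Fin r) (Fin m) (ZMod 2) | M.rank = m},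
          (#{a | ¬ hammingNorm (vecMul a M) = 1} : ℝ) ^ N
        = #{M : Matrix (Fin r) (Fin m) (ZMod 2) | M.rank = m} * (q * 2 ^ r) ^ N := by
          rw [sum_congr rfl fun M hM => by
              rw [card_filter_not_hammingNorm_vecMul_eq_one (by simpa using hM)],
            sum_const, nsmul_eq_mul]
      _ < 2 ^ (m * r) * (q * 2 ^ r) ^ N := by
          have := one_sub_natCast_div_two_pow_pos m
          gcongr
          exact_mod_cast card_filter_rank_eq_lt_two_pow hm
      _ = 2 ^ (m * r) * q ^ N * (2 ^ r) ^ N := by rw [mul_pow, mul_assoc]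
      _ ≤ (2 ^ r) ^ N := mul_le_of_le_one_left (by positivity) hN
      _ = (Fintype.card (Fin r → ZMod 2) : ℝ) ^ N := by simp
  obtain ⟨A, hA, hcover⟩ := exists_finset_card_le_forall_exists_of_sum_card_pow_lt _ _ N hsum
  exact ⟨A, fun M hM => hcover M (by simpa using hM), hA⟩

theorem stmt10_general (r m : ℕ) (hm : 1 ≤ m) :
    F r m ≤ ⌈(m * r : ℝ) / (-(Real.logb 2 (1 - (m : ℝ) / 2 ^ m)))⌉₊ := by
  have hq₁ : 1 - (m : ℝ) / 2 ^ m < 1 := by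
    have : (0 : ℝ) < m / 2 ^ m := by positivity
    linarith
  have hN := two_rpow_mul_pow_le_one_of_div_neg_logb_le (one_sub_natCast_div_two_pow_pos m) hq₁
    (Nat.le_ceil ((m * r : ℝ) / _))
  rw [show (2 : ℝ) ^ ((m : ℝ) * r) = 2 ^ (m * r) by exact_mod_cast Real.rpow_natCast 2 (m * r)]
    at hN
  obtain ⟨A, hA, hcard⟩ := exists_isGenericReducing_card_le hm hN
  exact (Nat.sInf_le ⟨A, hA, rfl⟩ : F r m ≤ #A).trans hcard

theorem stmt10 (r m : ℕ) (hm : 1 ≤ m) (hmr : m ≤ r) :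
    F r m ≤ ⌈(m * r : ℝ) / (-(Real.logb 2 (1 - (m : ℝ) / 2 ^ m)))⌉₊ :=
  stmt10_general r m hm
end

section
/- For the binary [5,1] repetition code C and the parity check set H = {10001, 01100, 01111, 01010} ⊆ C^⊥, every C-correctable erasure set E ⊆ {1,...,5} of size 4 admits some h ∈ H with exactly one 1 in the positions of E, yet the set {2,3,4} is a stopping set for H (no h ∈ H has exactly one 1 in positions {2,3,4}) that does not contain the support of a nonzero codeword of C. -/
/-!
A nonzero word of a repetition code is nonzero in every coordinate, so no proper subset of the
positions contains its support: every erasure set of size 4 is correctable, and so is `{2,3,4}`.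
Such a set misses exactly one position `i`, and for each `i` one of the checks meets the other
four positions exactly once. Each check has even weight, hence is orthogonal to the constant
words, while each meets `{2,3,4}` in zero or two positions.
-/

open Finset

section RepetitionCode

variable {ι R : Type*}

lemma eq_const_of_forall_eq {x : ι → R} (hx : ∀ i j, x i = x j) (i : ι) :
    x = Function.const ι (x i) :=
  funext fun j => hx j i

lemma apply_ne_zero_of_forall_eq [Zero R] {x : ι → R} (hx : ∀ i j, x i = x j) (hx0 : x ≠ 0)
    (j : ι) : x j ≠ 0 :=
  fun hj => hx0 (funext fun k => (hx k j).trans hj)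

lemma dotProduct_const [Fintype ι] [NonUnitalNonAssocSemiring R] (v : ι → R) (a : R) :
    v ⬝ᵥ Function.const ι a = (∑ i, v i) * a := by
  simp [dotProduct, Finset.sum_mul]

end RepetitionCode

lemma Finset.exists_eq_erase_of_card_add_one_eq {α : Type*} [Fintype α] [DecidableEq α]
    {E : Finset α} (hE : #E + 1 = Fintype.card α) : ∃ i, E = univ.erase i := by
  obtain ⟨i, hi⟩ := card_eq_one.mp (show #Eᶜ = 1 by rw [card_compl]; omega)
  exact ⟨i, by rw [← compl_singleton, ← hi, compl_compl]⟩

/-- Example: the `[5,1]` repetition code with parity checks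
`H = {10001, 01100, 01111, 01010}`. -/
theorem stmt18 :
    let C : Set (Fin 5 → ZMod 2) := {x | ∀ i j, x i = x j}
    let H : Finset (Fin 5 → ZMod 2) :=
      {![1, 0, 0, 0, 1], ![0, 1, 1, 0, 0], ![0, 1, 1, 1, 1], ![0, 1, 0, 1, 0]}
    -- every parity check lies in the dual code
    (∀ h ∈ H, ∀ c ∈ C, dotProduct h c = 0) ∧
    -- H is 4-erasure reducing for C
    (∀ E : Finset (Fin 5), E.card = 4 →
      (¬ ∃ x ∈ C, x ≠ 0 ∧ {j | x j ≠ 0} ⊆ (E : Set (Fin 5))) →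
      ∃ h ∈ H, (E.filter (fun j => h j ≠ 0)).card = 1) ∧
    -- {2,3,4} (1-indexed) is a stopping set for H
    (∀ h ∈ H, (({1, 2, 3} : Finset (Fin 5)).filter (fun j => h j ≠ 0)).card ≠ 1) ∧
    -- which does not contain the support of a nonzero codeword
    (¬ ∃ x ∈ C, x ≠ 0 ∧
      {j | x j ≠ 0} ⊆ (({1, 2, 3} : Finset (Fin 5)) : Set (Fin 5))) := by
  intro C H
  have even_weight : ∀ h ∈ H, ∑ i, h i = 0 := by decide
  have meets_once :
      ∀ i : Fin 5, ∃ h ∈ H, ((univ.erase i).filter (fun j => h j ≠ 0)).card = 1 := by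
    decide
  refine ⟨fun h hh c hc => ?_, fun E hE _ => ?_, by decide, ?_⟩
  · rw [eq_const_of_forall_eq hc 0, dotProduct_const, even_weight h hh, zero_mul]
  · obtain ⟨i, rfl⟩ := exists_eq_erase_of_card_add_one_eq (E := E) (by simp [hE])
    exact meets_once i
  · rintro ⟨x, hx, hx0, hsub⟩
    exact absurd (hsub (apply_ne_zero_of_forall_eq hx hx0 0)) (by decide)
end
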